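/- arXiv:2105.00288 — 2 statements merged into one kernel-verified Lean document; each statement's English description precedes it below -/
import Mathlib

section
/- With U_β and L_β as in the previous definitions and γ ∈ (0,1), the interval I_α(X,R) = [L_{αγ}(X,R), U_{α(1−γ)}(X,R)] satisfies P(FDP(θ, R) ∈ I_α(X,R) | X) ≥ 1 − α almost surely, and hence P(FDP(θ, S(X)) ∈ I_α(X, S(X))) ≥ 1 − α for any measurable selection policy S(·) with S(X) nonempty. -/
open MeasureTheory ProbabilityTheory

/-- False discovery proportion of configuration `θ` on selected set `R`. -/
noncomputable def FDP {m : ℕ} (θ : Fin m → Bool) (R : Finset (Fin m)) : ℝ :=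
  ((R.filter (fun i => θ i = false)).card : ℝ) / max (R.card : ℝ) 1

instance {m : ℕ} : MeasurableSpace (Finset (Fin m)) := ⊤

/-!
Let `N` be the number of nulls in `R`. The indices `n_U = |R| U` and `n_L = |R| L` are
`σ(X)`-measurable and take finitely many values, so conditionally on `X` they may be plugged in
as constants: `P(N ≤ n_U | X) ≥ 1 - α(1 - γ)` and `P(n_L ≤ N | X) ≥ 1 - αγ` hold by their very
choice, and a union bound gives joint coverage `1 - α`. The selected set `S(X)` is again a
`σ(X)`-measurable index with finitely many values, so the same plug-in gives conditional
coverage `1 - α` of the selected interval, and taking expectations gives the unconditional bound.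
-/

open Filter

section CondProb

variable {Ω ι : Type*} {m : MeasurableSpace Ω} [m0 : MeasurableSpace Ω] {μ : Measure Ω}
  [IsFiniteMeasure μ]

lemma measurableSet_setOf_mem_comp [Countable ι] {D : ι → Set Ω} (hD : ∀ i, MeasurableSet (D i))
    {g : Ω → ι} (hg : ∀ i, MeasurableSet {ω | g ω = i}) :
    MeasurableSet {ω | ω ∈ D (g ω)} := by
  have hsplit : {ω | ω ∈ D (g ω)} = ⋃ i, {ω | g ω = i} ∩ D i := by
    ext ω
    simp
  rw [hsplit]
  exact .iUnion fun i => (hg i).inter (hD i)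

lemma condProb_comp_ae_eq (hm : m ≤ m0) {D : ι → Set Ω} (hD : ∀ i, MeasurableSet (D i))
    {g : Ω → ι} (hg : ∀ i, MeasurableSet[m] {ω | g ω = i}) {s : Finset ι} (hgs : ∀ ω, g ω ∈ s) :
    μ⟦{ω | ω ∈ D (g ω)} | m⟧ =ᵐ[μ] fun ω => (μ⟦D (g ω) | m⟧) ω := by
  have hsplit : {ω | ω ∈ D (g ω)}.indicator (fun _ => (1 : ℝ)) =
      ∑ i ∈ s, {ω | g ω = i}.indicator ((D i).indicator fun _ => 1) := by
    ext ω
    rw [Finset.sum_apply, Finset.sum_eq_single_of_mem (g ω) (hgs ω)]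
    · simp
      rfl
    · intro i _ hi
      simp [Ne.symm hi]
  have hint (i : ι) : Integrable ((D i).indicator fun _ => (1 : ℝ)) μ :=
    (integrable_const 1).indicator (hD i)
  have hsum := condExp_finsetSum (s := s) (fun i _ => (hint i).indicator (hm _ (hg i))) m
  have hpieces : ∀ᵐ ω ∂μ, ∀ i ∈ s,
      μ[{ω | g ω = i}.indicator ((D i).indicator fun _ => (1 : ℝ)) | m] ω =
        {ω | g ω = i}.indicator (μ⟦D i | m⟧) ω :=
    (eventually_all_finset s).2 fun i _ => condExp_indicator (hint i) (hg i)
  filter_upwards [hsum, hpieces] with ω hω hωi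
  rw [hsplit, hω, Finset.sum_apply, Finset.sum_congr rfl hωi,
    Finset.sum_eq_single_of_mem (g ω) (hgs ω)]
  · simp
  · intro i _ hi
    simp [Ne.symm hi]

lemma condProb_add_le_condProb_inter_add_one (hm : m ≤ m0) {A B : Set Ω} (hA : MeasurableSet A)
    (hB : MeasurableSet B) :
    ∀ᵐ ω ∂μ, (μ⟦A | m⟧) ω + (μ⟦B | m⟧) ω ≤ (μ⟦A ∩ B | m⟧) ω + 1 := by
  have hint {C : Set Ω} (hC : MeasurableSet C) : Integrable (C.indicator fun _ => (1 : ℝ)) μ :=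
    (integrable_const 1).indicator hC
  have hpt : A.indicator (fun _ => (1 : ℝ)) + B.indicator (fun _ => 1) ≤
      (A ∩ B).indicator (fun _ => 1) + fun _ => 1 := by
    intro ω
    by_cases hωA : ω ∈ A <;> by_cases hωB : ω ∈ B <;> simp [hωA, hωB]
  have hmono := condExp_mono (m := m) ((hint hA).add (hint hB))
    ((hint (hA.inter hB)).add (integrable_const 1)) (.of_forall hpt)
  filter_upwards [hmono, condExp_add (hint hA) (hint hB) m,
    condExp_add (hint (hA.inter hB)) (integrable_const (1 : ℝ)) m] with ω hω hAB hABc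
  rw [hAB, hABc, condExp_const hm] at hω
  exact hω

omit [IsFiniteMeasure μ] in
lemma le_measureReal_of_ae_le_condProb [IsProbabilityMeasure μ] (hm : m ≤ m0) {A : Set Ω}
    (hA : MeasurableSet A) {c : ℝ} (hc : ∀ᵐ ω ∂μ, c ≤ (μ⟦A | m⟧) ω) : c ≤ μ.real A := by
  calc c = ∫ _, c ∂μ := by simp
    _ ≤ ∫ ω, (μ⟦A | m⟧) ω ∂μ := integral_mono_ae (integrable_const c) integrable_condExp hc
    _ = μ.real A := by
      rw [integral_condExp hm, integral_indicator_const _ hA, smul_eq_mul, mul_one]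

end CondProb

lemma measurable_apply_setOf_le_and {Ω β : Type*} {mΩ : MeasurableSpace Ω} [MeasurableSpace β]
    {M : ℕ} {p : ℕ → Ω → Prop} (hp : ∀ n, MeasurableSet {ω | p n ω}) (Φ : Set ℕ → β) :
    Measurable fun ω => Φ {n | n ≤ M ∧ p n ω} := by
  have hfactor : (fun ω => Φ {n | n ≤ M ∧ p n ω}) =
      (fun q : Fin (M + 1) → Prop => Φ {n | ∃ h : n < M + 1, q ⟨n, h⟩}) ∘ fun ω k => p k ω := by
    ext ω
    simp
  rw [hfactor]
  exact (measurable_of_countable _).comp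
    (measurable_pi_lambda _ fun k => measurableSet_setOfPred.1 (hp k))

section CredibleCount

variable {Ω : Type*}

/-- For `m = σ(X)`, `N` the number of nulls in `R` and `M` the number of hypotheses, these are
`|R| U_{1-c}(X, R)` and `|R| L_{1-c}(X, R)`. -/
noncomputable def upperCredibleCount {mΩ : MeasurableSpace Ω} (μ : Measure Ω)
    (m : MeasurableSpace Ω) (N : Ω → ℕ) (M : ℕ) (c : ℝ) (ω : Ω) : ℕ :=
  sInf {n | n ≤ M ∧ c ≤ (μ⟦{ω' | N ω' ≤ n} | m⟧) ω}

noncomputable def lowerCredibleCount {mΩ : MeasurableSpace Ω} (μ : Measure Ω)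
    (m : MeasurableSpace Ω) (N : Ω → ℕ) (M : ℕ) (c : ℝ) (ω : Ω) : ℕ :=
  sSup {n | n ≤ M ∧ c ≤ (μ⟦{ω' | n ≤ N ω'} | m⟧) ω}

variable {m : MeasurableSpace Ω} [m0 : MeasurableSpace Ω] {μ : Measure Ω} {N : Ω → ℕ} {M : ℕ}
  {c c' : ℝ}

lemma measurable_upperCredibleCount : Measurable[m] (upperCredibleCount μ m N M c) :=
  measurable_apply_setOf_le_and
    (fun _ => measurableSet_le measurable_const stronglyMeasurable_condExp.measurable) _

lemma measurable_lowerCredibleCount : Measurable[m] (lowerCredibleCount μ m N M c) :=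
  measurable_apply_setOf_le_and
    (fun _ => measurableSet_le measurable_const stronglyMeasurable_condExp.measurable) _

lemma measurableSet_credibleInterval (hm : m ≤ m0) (hN : Measurable N) :
    MeasurableSet ({ω | lowerCredibleCount μ m N M c ω ≤ N ω} ∩
      {ω | N ω ≤ upperCredibleCount μ m N M c' ω}) :=
  (measurableSet_le (measurable_lowerCredibleCount.mono hm le_rfl) hN).inter
    (measurableSet_le hN (measurable_upperCredibleCount.mono hm le_rfl))

variable [IsFiniteMeasure μ]

lemma ae_le_condProb_le_upperCredibleCount (hm : m ≤ m0) (hN : Measurable N)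
    (hNM : ∀ ω, N ω ≤ M) (hc : c ≤ 1) :
    ∀ᵐ ω ∂μ, c ≤ (μ⟦{ω | N ω ≤ upperCredibleCount μ m N M c ω} | m⟧) ω := by
  have hmem (ω : Ω) := Nat.sInf_mem (s := {n | n ≤ M ∧ c ≤ (μ⟦{ω' | N ω' ≤ n} | m⟧) ω})
    ⟨M, le_rfl, by simpa [hNM, condExp_const hm] using hc⟩
  filter_upwards [condProb_comp_ae_eq hm (D := fun n => {ω | N ω ≤ n})
    (fun _ => hN measurableSet_Iic)
    (fun n => measurable_upperCredibleCount (measurableSet_singleton n))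
    (s := Finset.range (M + 1)) (fun ω => Finset.mem_range_succ_iff.2 (hmem ω).1)] with ω hω
  rw [hω]
  exact (hmem ω).2

lemma ae_le_condProb_lowerCredibleCount_le (hm : m ≤ m0) (hN : Measurable N) (hc : c ≤ 1) :
    ∀ᵐ ω ∂μ, c ≤ (μ⟦{ω | lowerCredibleCount μ m N M c ω ≤ N ω} | m⟧) ω := by
  have hmem (ω : Ω) := Nat.sSup_mem (s := {n | n ≤ M ∧ c ≤ (μ⟦{ω' | n ≤ N ω'} | m⟧) ω})
    ⟨0, M.zero_le, by simpa [condExp_const hm] using hc⟩ ⟨M, fun _ hn => hn.1⟩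
  filter_upwards [condProb_comp_ae_eq hm (D := fun n => {ω | n ≤ N ω})
    (fun _ => hN measurableSet_Ici)
    (fun n => measurable_lowerCredibleCount (measurableSet_singleton n))
    (s := Finset.range (M + 1)) (fun ω => Finset.mem_range_succ_iff.2 (hmem ω).1)] with ω hω
  rw [hω]
  exact (hmem ω).2

lemma ae_le_condProb_credibleInterval (hm : m ≤ m0) (hN : Measurable N) (hNM : ∀ ω, N ω ≤ M)
    (hc : c ≤ 1) (hc' : c' ≤ 1) :
    ∀ᵐ ω ∂μ, c + c' - 1 ≤ (μ⟦{ω | lowerCredibleCount μ m N M c ω ≤ N ω} ∩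
      {ω | N ω ≤ upperCredibleCount μ m N M c' ω} | m⟧) ω := by
  filter_upwards [ae_le_condProb_lowerCredibleCount_le (M := M) hm hN hc,
    ae_le_condProb_le_upperCredibleCount hm hN hNM hc',
    condProb_add_le_condProb_inter_add_one hm
      (measurableSet_le (measurable_lowerCredibleCount.mono hm le_rfl) hN)
      (measurableSet_le hN (measurable_upperCredibleCount.mono hm le_rfl))] with ω hL hU hLU
  linarith

end CredibleCount

noncomputable def nullCount {k : ℕ} (v : Fin k → Bool) (R : Finset (Fin k)) : ℕ :=
  (R.filter fun i => v i = false).card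

lemma nullCount_le {k : ℕ} (v : Fin k → Bool) (R : Finset (Fin k)) : nullCount v R ≤ k :=
  ((R.card_filter_le _).trans (Finset.card_le_univ R)).trans_eq (Fintype.card_fin k)

lemma FDP_mem_Icc_div_card_iff {k : ℕ} {v : Fin k → Bool} {R : Finset (Fin k)} (hR : R.Nonempty)
    {a b : ℕ} :
    FDP v R ∈ Set.Icc ((a : ℝ) / R.card) ((b : ℝ) / R.card) ↔
      a ≤ nullCount v R ∧ nullCount v R ≤ b := by
  have hcard : (1 : ℝ) ≤ R.card := by exact_mod_cast hR.card_pos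
  rw [FDP, max_eq_left hcard, Set.mem_Icc,
    div_le_div_iff_of_pos_right (by positivity), div_le_div_iff_of_pos_right (by positivity),
    Nat.cast_le, Nat.cast_le, nullCount]

section FDPCoverage

variable {Ω : Type*} {k : ℕ}

/-- For `m = σ(X)`, `c = 1 - αγ` and `c' = 1 - α(1 - γ)` this is `{FDP(θ, R) ∈ I_α(X, R)}`. -/
noncomputable def fdpCoverageEvent {mΩ : MeasurableSpace Ω} (μ : Measure Ω) (m : MeasurableSpace Ω)
    (θ : Ω → Fin k → Bool) (R : Finset (Fin k)) (c c' : ℝ) : Set Ω :=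
  {ω | FDP (θ ω) R ∈ Set.Icc
    ((lowerCredibleCount μ m (fun ω => nullCount (θ ω) R) k c ω : ℝ) / R.card)
    ((upperCredibleCount μ m (fun ω => nullCount (θ ω) R) k c' ω : ℝ) / R.card)}

variable {m : MeasurableSpace Ω} [m0 : MeasurableSpace Ω] {μ : Measure Ω} {θ : Ω → Fin k → Bool}
  {R : Finset (Fin k)} {c c' : ℝ}

lemma fdpCoverageEvent_empty : fdpCoverageEvent μ m θ ∅ c c' = Set.univ := by
  ext
  simp [fdpCoverageEvent, FDP]

lemma fdpCoverageEvent_of_nonempty (hR : R.Nonempty) :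
    fdpCoverageEvent μ m θ R c c' =
      {ω | lowerCredibleCount μ m (fun ω => nullCount (θ ω) R) k c ω ≤ nullCount (θ ω) R} ∩
      {ω | nullCount (θ ω) R ≤ upperCredibleCount μ m (fun ω => nullCount (θ ω) R) k c' ω} := by
  ext ω
  exact FDP_mem_Icc_div_card_iff hR

lemma measurable_nullCount (hθ : Measurable θ) (R : Finset (Fin k)) :
    Measurable fun ω => nullCount (θ ω) R :=
  (measurable_of_countable fun v => nullCount v R).comp hθ

lemma measurableSet_fdpCoverageEvent (hm : m ≤ m0) (hθ : Measurable θ) :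
    MeasurableSet (fdpCoverageEvent μ m θ R c c') := by
  rcases R.eq_empty_or_nonempty with rfl | hR
  · rw [fdpCoverageEvent_empty]
    exact .univ
  rw [fdpCoverageEvent_of_nonempty hR]
  exact measurableSet_credibleInterval hm (measurable_nullCount hθ R)

lemma ae_le_condProb_fdpCoverageEvent [IsFiniteMeasure μ] (hm : m ≤ m0) (hθ : Measurable θ)
    (hc : c ≤ 1) (hc' : c' ≤ 1) :
    ∀ᵐ ω ∂μ, c + c' - 1 ≤ (μ⟦fdpCoverageEvent μ m θ R c c' | m⟧) ω := by
  rcases R.eq_empty_or_nonempty with rfl | hR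
  · -- the junk value `x / 0 = 0` makes `FDP` and both endpoints vanish on `∅`
    simp only [fdpCoverageEvent_empty, Set.indicator_univ, condExp_const hm]
    exact .of_forall fun _ => by linarith
  rw [fdpCoverageEvent_of_nonempty hR]
  exact ae_le_condProb_credibleInterval hm (measurable_nullCount hθ R) (fun _ => nullCount_le _ R)
    hc hc'

end FDPCoverage

theorem stmt3_general {Ω 𝒳 : Type*} [MeasurableSpace Ω] [MeasurableSpace 𝒳]
    (μ : Measure Ω) [IsProbabilityMeasure μ] {m : ℕ}
    (θ : Ω → Fin m → Bool) (hθ : Measurable θ)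
    (X : Ω → 𝒳) (hX : Measurable X)
    (α γ : ℝ) (hα : α ∈ Set.Ioo (0:ℝ) 1) (hγ : γ ∈ Set.Ioo (0:ℝ) 1)
    -- conditional probabilities `cp R n ω = P(∑_{i∈R}(1−θ_i) ≤ n | X)(ω)` and
    -- `cp' R n ω = P(∑_{i∈R}(1−θ_i) ≥ n | X)(ω)`
    (cp cp' : Finset (Fin m) → ℕ → Ω → ℝ)
    (hcp : ∀ R n, cp R n =
      μ[Set.indicator {ω | (R.filter (fun i => θ ω i = false)).card ≤ n}
          (fun _ => (1 : ℝ)) | MeasurableSpace.comap X inferInstance])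
    (hcp' : ∀ R n, cp' R n =
      μ[Set.indicator {ω | n ≤ (R.filter (fun i => θ ω i = false)).card}
          (fun _ => (1 : ℝ)) | MeasurableSpace.comap X inferInstance])
    -- the bounds `U_{α(1−γ)}(X,R)` and `L_{αγ}(X,R)`
    (U L : Finset (Fin m) → Ω → ℝ)
    (hU : U = fun R ω =>
      ((sInf {n : ℕ | n ≤ m ∧ 1 - α * (1 - γ) ≤ cp R n ω} : ℕ) : ℝ) / (R.card : ℝ))
    (hL : L = fun R ω =>
      ((sSup {n : ℕ | n ≤ m ∧ 1 - α * γ ≤ cp' R n ω} : ℕ) : ℝ) / (R.card : ℝ))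
    -- a measurable selection policy
    (S : 𝒳 → Finset (Fin m)) (hS : Measurable S) :
    (∀ R : Finset (Fin m), R.Nonempty →
      ∀ᵐ ω ∂μ,
        1 - α ≤
          (μ[Set.indicator {ω' | FDP (θ ω') R ∈ Set.Icc (L R ω') (U R ω')}
              (fun _ => (1 : ℝ)) | MeasurableSpace.comap X inferInstance]) ω) ∧
    1 - α ≤ (μ {ω | FDP (θ ω) (S (X ω)) ∈ Set.Icc (L (S (X ω)) ω) (U (S (X ω)) ω)}).toReal := by
  obtain ⟨hα0, -⟩ := hα
  obtain ⟨hγ0, hγ1⟩ := hγ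
  have hm : MeasurableSpace.comap X inferInstance ≤ ‹MeasurableSpace Ω› := hX.comap_le
  obtain rfl : cp = _ := funext₂ hcp
  obtain rfl : cp' = _ := funext₂ hcp'
  subst hU hL
  have hcover (R : Finset (Fin m)) : ∀ᵐ ω ∂μ, 1 - α ≤ (μ⟦fdpCoverageEvent μ
      (MeasurableSpace.comap X inferInstance) θ R (1 - α * γ) (1 - α * (1 - γ)) |
      MeasurableSpace.comap X inferInstance⟧) ω := by
    filter_upwards [ae_le_condProb_fdpCoverageEvent (R := R) hm hθ (c := 1 - α * γ)
      (c' := 1 - α * (1 - γ)) (by nlinarith) (by nlinarith)] with ω hω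
    linarith
  have hmeas (R : Finset (Fin m)) := measurableSet_fdpCoverageEvent (R := R) (μ := μ)
    (c := 1 - α * γ) (c' := 1 - α * (1 - γ)) hm hθ
  have hSX (R : Finset (Fin m)) :
      MeasurableSet[MeasurableSpace.comap X inferInstance] {ω | S (X ω) = R} :=
    ⟨S ⁻¹' {R}, hS trivial, rfl⟩
  refine ⟨fun R _ => hcover R, le_measureReal_of_ae_le_condProb hm
    (measurableSet_setOf_mem_comp hmeas fun R => hm _ (hSX R)) ?_⟩
  filter_upwards [condProb_comp_ae_eq hm hmeas hSX (fun _ => Finset.mem_univ _),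
    ae_all_iff.2 hcover] with ω hsel hcov
  exact (hcov _).trans_eq hsel.symm

/-- The posterior interval `[L_{αγ}(X,R), U_{α(1−γ)}(X,R)]` has conditional coverage
`≥ 1 − α` given `X` for every fixed nonempty `R`, and hence unconditional coverage
`≥ 1 − α` for any measurable selection policy `S` with `S(X)` nonempty. -/
theorem stmt3 {Ω 𝒳 : Type*} [MeasurableSpace Ω] [MeasurableSpace 𝒳]
    (μ : Measure Ω) [IsProbabilityMeasure μ] {m : ℕ}
    (θ : Ω → Fin m → Bool) (hθ : Measurable θ)
    (X : Ω → 𝒳) (hX : Measurable X)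
    (α γ : ℝ) (hα : α ∈ Set.Ioo (0:ℝ) 1) (hγ : γ ∈ Set.Ioo (0:ℝ) 1)
    -- conditional probabilities `cp R n ω = P(∑_{i∈R}(1−θ_i) ≤ n | X)(ω)` and
    -- `cp' R n ω = P(∑_{i∈R}(1−θ_i) ≥ n | X)(ω)`
    (cp cp' : Finset (Fin m) → ℕ → Ω → ℝ)
    (hcp : ∀ R n, cp R n =
      μ[Set.indicator {ω | (R.filter (fun i => θ ω i = false)).card ≤ n}
          (fun _ => (1 : ℝ)) | MeasurableSpace.comap X inferInstance])
    (hcp' : ∀ R n, cp' R n =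
      μ[Set.indicator {ω | n ≤ (R.filter (fun i => θ ω i = false)).card}
          (fun _ => (1 : ℝ)) | MeasurableSpace.comap X inferInstance])
    -- the bounds `U_{α(1−γ)}(X,R)` and `L_{αγ}(X,R)`
    (U L : Finset (Fin m) → Ω → ℝ)
    (hU : U = fun R ω =>
      ((sInf {n : ℕ | n ≤ m ∧ 1 - α * (1 - γ) ≤ cp R n ω} : ℕ) : ℝ) / (R.card : ℝ))
    (hL : L = fun R ω =>
      ((sSup {n : ℕ | n ≤ m ∧ 1 - α * γ ≤ cp' R n ω} : ℕ) : ℝ) / (R.card : ℝ))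
    -- a measurable selection policy with nonempty selections
    (S : 𝒳 → Finset (Fin m)) (hS : Measurable S) (hSne : ∀ x, (S x).Nonempty) :
    (∀ R : Finset (Fin m), R.Nonempty →
      ∀ᵐ ω ∂μ,
        1 - α ≤
          (μ[Set.indicator {ω' | FDP (θ ω') R ∈ Set.Icc (L R ω') (U R ω')}
              (fun _ => (1 : ℝ)) | MeasurableSpace.comap X inferInstance]) ω) ∧
    1 - α ≤ (μ {ω | FDP (θ ω) (S (X ω)) ∈ Set.Icc (L (S (X ω)) ω) (U (S (X ω)) ω)}).toReal :=
  stmt3_general μ θ hθ X hX α γ hα hγ cp cp' hcp hcp' U L hU hL S hS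
end

section
/- Let μ and ν be probability measures on {0,1}^m, R ⊂ {1,…,m} nonempty of size s, β ∈ (0,1), and U_β(ν) = s^{-1} min{n ∈ {0,…,m} : ν(Σ_{i∈R}(1−θ_i) ≤ n) ≥ 1−β}. Then μ(FDP(θ,R) ≤ U_β(ν)) ≥ 1 − β − d_TV(μ, ν). -/
/-! The minimum defining `U` is attained (`n = m` is always admissible), so the set `A` of
configurations with at most `s U` nulls in `R` has `ν(A) ≥ 1 - β`. Since `A ⊆ {FDP ≤ U}`,
`μ(FDP ≤ U) ≥ μ(A) ≥ ν(A) - d_TV(μ, ν)`. -/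

open MeasureTheory ProbabilityTheory

/-- Total variation distance between two measures:
`d_TV(μ,ν) = sup_A |μ(A) − ν(A)|` over measurable sets `A`. -/
noncomputable def dTV {α : Type*} [MeasurableSpace α] (μ ν : Measure α) : ℝ :=
  ⨆ A : {A : Set α // MeasurableSet A}, |(μ A).toReal - (ν A).toReal|

section TotalVariation

variable {α : Type*} [MeasurableSpace α] (μ ν : Measure α) [IsFiniteMeasure μ]
  [IsFiniteMeasure ν]

lemma bddAbove_range_abs_sub_measure :
    BddAbove (Set.range fun A : {A : Set α // MeasurableSet A} =>
      |(μ A).toReal - (ν A).toReal|) := by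
  refine ⟨μ.real Set.univ + ν.real Set.univ, ?_⟩
  rintro _ ⟨A, rfl⟩
  have hμ : μ.real A ≤ μ.real Set.univ := measureReal_mono (Set.subset_univ _)
  have hν : ν.real A ≤ ν.real Set.univ := measureReal_mono (Set.subset_univ _)
  have hμ0 : 0 ≤ μ.real A := measureReal_nonneg
  have hν0 : 0 ≤ ν.real A := measureReal_nonneg
  simp only [← measureReal_def]
  rw [abs_sub_le_iff]
  constructor <;> linarith

lemma abs_sub_measure_le_dTV {A : Set α} (hA : MeasurableSet A) :
    |(μ A).toReal - (ν A).toReal| ≤ dTV μ ν :=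
  le_ciSup (bddAbove_range_abs_sub_measure μ ν) ⟨A, hA⟩

lemma toReal_measure_sub_dTV_le {A B : Set α} (hA : MeasurableSet A) (hAB : A ⊆ B) :
    (ν A).toReal - dTV μ ν ≤ (μ B).toReal := by
  have hdiff : (ν A).toReal - (μ A).toReal ≤ dTV μ ν :=
    (le_abs_self _).trans ((abs_sub_comm _ _).trans_le (abs_sub_measure_le_dTV μ ν hA))
  have hmono : (μ A).toReal ≤ (μ B).toReal :=
    ENNReal.toReal_mono (measure_ne_top _ _) (measure_mono hAB)
  linarith

end TotalVariation

lemma one_sub_le_measure_le_sInf {α : Type*} [MeasurableSpace α] (ν : Measure α)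
    [IsProbabilityMeasure ν] (f : α → ℕ) {m : ℕ} (hf : ∀ x, f x ≤ m) {β : ℝ} (hβ : 0 ≤ β) :
    1 - β ≤ (ν {x | f x ≤ sInf {n : ℕ | n ≤ m ∧ 1 - β ≤ (ν {x | f x ≤ n}).toReal}}).toReal := by
  have hm : m ∈ {n : ℕ | n ≤ m ∧ 1 - β ≤ (ν {x | f x ≤ n}).toReal} := by
    refine ⟨le_rfl, ?_⟩
    simp only [hf, Set.ofPred_true, measure_univ, ENNReal.toReal_one]
    linarith
  exact (Nat.sInf_mem ⟨m, hm⟩).2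

lemma FDP_le_div_card {m : ℕ} {θ : Fin m → Bool} {R : Finset (Fin m)} {n : ℕ}
    (h : (R.filter (fun i => θ i = false)).card ≤ n) : FDP θ R ≤ n / R.card := by
  -- For `R = ∅` both sides are `0`, the right one because `n / 0 = 0`.
  rcases R.eq_empty_or_nonempty with rfl | hR
  · simp [FDP]
  · have hcard : (1 : ℝ) ≤ R.card := by exact_mod_cast hR.card_pos
    rw [FDP, max_eq_left hcard]
    gcongr

theorem stmt12_general {m : ℕ} (μ ν : Measure (Fin m → Bool))
    [IsProbabilityMeasure μ] [IsProbabilityMeasure ν]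
    (R : Finset (Fin m))
    (β : ℝ) (hβ : β ∈ Set.Ioo (0:ℝ) 1)
    (U : ℝ)
    (hU : U = ((sInf {n : ℕ | n ≤ m ∧
        1 - β ≤ (ν {θ | (R.filter (fun i => θ i = false)).card ≤ n}).toReal} : ℕ) : ℝ)
      / (R.card : ℝ)) :
    1 - β - dTV μ ν ≤ (μ {θ | FDP θ R ≤ U}).toReal := by
  have hcount_le (θ : Fin m → Bool) : (R.filter (fun i => θ i = false)).card ≤ m :=
    (Finset.card_filter_le _ _).trans (R.card_le_univ.trans_eq (Fintype.card_fin m))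
  have hquantile := one_sub_le_measure_le_sInf ν _ hcount_le hβ.1.le
  have hsub : {θ : Fin m → Bool | (R.filter (fun i => θ i = false)).card ≤
      sInf {n : ℕ | n ≤ m ∧ 1 - β ≤ (ν {θ | (R.filter (fun i => θ i = false)).card ≤ n}).toReal}}
      ⊆ {θ | FDP θ R ≤ U} :=
    fun θ hθ ↦ hU ▸ FDP_le_div_card hθ
  linarith [toReal_measure_sub_dTV_le μ ν (Set.to_countable _).measurableSet hsub]

/-- Key step of plug-in consistency: the bound computed under `ν` covers the FDP
under `μ` up to a total variation correction:
`μ(FDP(θ,R) ≤ U_β(ν)) ≥ 1 − β − d_TV(μ,ν)`. -/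
theorem stmt12 {m : ℕ} (μ ν : Measure (Fin m → Bool))
    [IsProbabilityMeasure μ] [IsProbabilityMeasure ν]
    (R : Finset (Fin m)) (hR : R.Nonempty)
    (β : ℝ) (hβ : β ∈ Set.Ioo (0:ℝ) 1)
    (U : ℝ)
    (hU : U = ((sInf {n : ℕ | n ≤ m ∧
        1 - β ≤ (ν {θ | (R.filter (fun i => θ i = false)).card ≤ n}).toReal} : ℕ) : ℝ)
      / (R.card : ℝ)) :
    1 - β - dTV μ ν ≤ (μ {θ | FDP θ R ≤ U}).toReal :=
  stmt12_general μ ν R β hβ U hU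
end
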